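/- arXiv:2402.04909 — 3 statements merged into one kernel-verified Lean document; each statement's English description precedes it below -/
import Mathlib

section
/- Let 𝒳 ⊆ ℝ² be open and convex, 𝒪 ⊆ 𝒳 closed, 𝒳_free := closure(𝒳) \ interior(𝒪), and let x_a, x ∈ 𝒳_free be joined by a path of finite length in 𝒳_free. Then there exists a path γ in 𝒳_free from x_a to x such that for all 0 ≤ s₁ ≤ s₂ ≤ 1 with γ(s₁) = γ(s₂), the restricted path γ|[s₁,s₂] is path-homotopic within 𝒳_free to the constant path at γ(s₁). (Hence every point of 𝒳_free joined to the anchor by a finite-length free path is reachable by a tether configuration that is non-entangled in the sense of the 2D Tether Loop around Obstacle definition.) -/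
open Set

noncomputable section

/-- `γ`, restricted to `[0,1]`, is a path in `F` from `x` to `y`. -/
def IsPathIn {E : Type*} [TopologicalSpace E] (F : Set E) (γ : ℝ → E) (x y : E) : Prop :=
  ContinuousOn γ (Icc 0 1) ∧ (∀ s ∈ Icc (0:ℝ) 1, γ s ∈ F) ∧ γ 0 = x ∧ γ 1 = y

/-- `γ` is a shortest path in `F` from `x` to `y`, where the length of a path is its
total variation on `[0,1]`. -/
def IsShortestPathIn {E : Type*} [PseudoEMetricSpace E] (F : Set E) (γ : ℝ → E) (x y : E) :
    Prop :=
  IsPathIn F γ x y ∧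
    ∀ γ' : ℝ → E, IsPathIn F γ' x y → eVariationOn γ (Icc 0 1) ≤ eVariationOn γ' (Icc 0 1)

/-- `γ₀` and `γ₁` (as paths parametrized on `[0,1]`) are homotopic relative to their
endpoints through maps with values in `S`. -/
def PathHomotopicIn {E : Type*} [TopologicalSpace E] (S : Set E) (γ₀ γ₁ : ℝ → E) : Prop :=
  ∃ H : ℝ × ℝ → E,
    ContinuousOn H ((Icc (0:ℝ) 1) ×ˢ (Icc (0:ℝ) 1)) ∧
    (∀ p ∈ (Icc (0:ℝ) 1) ×ˢ (Icc (0:ℝ) 1), H p ∈ S) ∧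
    (∀ s ∈ Icc (0:ℝ) 1, H (s, 0) = γ₀ s) ∧
    (∀ s ∈ Icc (0:ℝ) 1, H (s, 1) = γ₁ s) ∧
    (∀ t ∈ Icc (0:ℝ) 1, H (0, t) = γ₀ 0) ∧
    (∀ t ∈ Icc (0:ℝ) 1, H (1, t) = γ₀ 1)

/-- The restriction of `γ` to `[s₁, s₂]`, reparametrized to `[0,1]`. -/
def subPath {E : Type*} (γ : ℝ → E) (s₁ s₂ : ℝ) : ℝ → E := fun s => γ (s₁ + s * (s₂ - s₁))

/-- The straight-line path from `p` to `q`. -/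
def linePath {E : Type*} [AddCommGroup E] [Module ℝ E] (p q : E) : ℝ → E :=
  fun t => (1 - t) • p + t • q

/-!
Fix a free path `γ₀` of finite length. Among all maps `g` with the endpoints of `γ₀`, values in
the compact set `γ₀ '' [0,1]` and `edist (g u) (g v)` at most the length of `γ₀` on `[u, v]`,
pick one of least length: the class is compact for pointwise convergence (Tychonoff) and length
is lower semicontinuous for it. The domination by `γ₀` makes every member continuous, and its
values lie on `γ₀`, hence in the free workspace. If the minimizer `γ` had a loop `γ s₁ = γ s₂`
of positive length, freezing `γ` on `[s₁, s₂]` would stay in the class and shorten it; so every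
loop of `γ` is constant, and trivially null-homotopic.
-/

open Filter Topology
open scoped ENNReal

section Variation

variable {α E : Type*} [LinearOrder α] [PseudoEMetricSpace E]

lemma eVariationOn_Icc_add_Icc (f : α → E) {a b c : α} (hab : a ≤ b) (hbc : b ≤ c) :
    eVariationOn f (Icc a b) + eVariationOn f (Icc b c) = eVariationOn f (Icc a c) := by
  simpa using eVariationOn.Icc_add_Icc f (s := univ) hab hbc (mem_univ b)

lemma lowerSemicontinuous_eVariationOn (s : Set α) :
    LowerSemicontinuous fun g : α → E => eVariationOn g s := fun g _ hv =>
  eVariationOn.lowerSemicontinuous_aux (F := id) (p := 𝓝 g)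
    (fun t _ => (continuous_apply t).tendsto g) hv

lemma continuousOn_of_edist_le_eVariationOn [TopologicalSpace α] [OrderTopology α]
    {f g : α → E} {s : Set α} (hf : BoundedVariationOn f s) (hfc : ContinuousOn f s)
    (hg : ∀ u ∈ s, ∀ v ∈ s, u ≤ v → edist (g u) (g v) ≤ eVariationOn f (s ∩ Icc u v)) :
    ContinuousOn g s := by
  intro x hx
  rw [ContinuousWithinAt, tendsto_iff_edist_tendsto_0]
  have hlim := (hf.tendsto_eVariationOn_Icc_zero_left ((hfc x hx).mono inter_subset_left)).add
    (hf.tendsto_eVariationOn_Icc_zero_right x ((hfc x hx).mono inter_subset_left))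
  rw [add_zero] at hlim
  refine tendsto_of_tendsto_of_tendsto_of_le_of_le' tendsto_const_nhds hlim
    (Eventually.of_forall fun _ => zero_le) ?_
  filter_upwards [self_mem_nhdsWithin] with y hy
  rcases le_total y x with hyx | hxy
  · exact (hg y hy x hx hyx).trans le_self_add
  · rw [edist_comm]
    exact (hg x hx y hy hxy).trans le_add_self

end Variation

section CutLoop

variable {α E : Type*} [LinearOrder α]

def cutLoop (g : α → E) (s₁ s₂ : α) : α → E := fun t => if t ∈ Ioo s₁ s₂ then g s₁ else g t

variable {g : α → E} {s₁ s₂ : α}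

lemma cutLoop_of_notMem {t : α} (ht : t ∉ Ioo s₁ s₂) : cutLoop g s₁ s₂ t = g t := if_neg ht

lemma cutLoop_of_mem {t : α} (ht : t ∈ Ioo s₁ s₂) : cutLoop g s₁ s₂ t = g s₁ := if_pos ht

lemma eqOn_cutLoop_Icc (h : g s₁ = g s₂) :
    EqOn (cutLoop g s₁ s₂) (fun _ => g s₁) (Icc s₁ s₂) := by
  intro t ht
  by_cases hin : t ∈ Ioo s₁ s₂
  · exact cutLoop_of_mem hin
  · rw [cutLoop_of_notMem hin]
    rcases eq_or_lt_of_le ht.1 with rfl | h₁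
    · rfl
    · rw [le_antisymm ht.2 (not_lt.mp fun h₂ => hin ⟨h₁, h₂⟩), h]

lemma eVariationOn_cutLoop_add [PseudoEMetricSpace E] {a b : α} (ha : a ≤ s₁) (h12 : s₁ ≤ s₂)
    (hb : s₂ ≤ b) (h : g s₁ = g s₂) :
    eVariationOn (cutLoop g s₁ s₂) (Icc a b) + eVariationOn g (Icc s₁ s₂) =
      eVariationOn g (Icc a b) := by
  have hleft : eVariationOn (cutLoop g s₁ s₂) (Icc a s₁) = eVariationOn g (Icc a s₁) :=
    eVariationOn.eq_of_eqOn fun t ht => cutLoop_of_notMem fun hin => not_le.mpr hin.1 ht.2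
  have hright : eVariationOn (cutLoop g s₁ s₂) (Icc s₂ b) = eVariationOn g (Icc s₂ b) :=
    eVariationOn.eq_of_eqOn fun t ht => cutLoop_of_notMem fun hin => not_le.mpr hin.2 ht.1
  have hmid : eVariationOn (cutLoop g s₁ s₂) (Icc s₁ s₂) = 0 := by
    rw [eVariationOn.eq_of_eqOn (eqOn_cutLoop_Icc h)]
    exact eVariationOn.constant_on (by simp [(nonempty_Icc.mpr h12).image_const])
  rw [← eVariationOn_Icc_add_Icc _ ha (h12.trans hb), ← eVariationOn_Icc_add_Icc _ h12 hb,
    ← eVariationOn_Icc_add_Icc g ha (h12.trans hb), ← eVariationOn_Icc_add_Icc g h12 hb,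
    hleft, hright, hmid]
  ring

end CutLoop

section Dominated

variable {E : Type*} [EMetricSpace E]

/-- Constraining the values on all of `ℝ`, not only on `[a, b]`, to the compact set `f '' [a, b]`
makes this class compact in the product topology. -/
def variationDominated (f : ℝ → E) (a b : ℝ) : Set (ℝ → E) :=
  {g | (∀ t, g t ∈ f '' Icc a b) ∧ g a = f a ∧ g b = f b ∧
    ∀ u ∈ Icc a b, ∀ v ∈ Icc a b, u ≤ v → edist (g u) (g v) ≤ eVariationOn f (Icc u v)}

variable {f g : ℝ → E} {a b : ℝ}

lemma isClosed_variationDominated (hf : IsCompact (f '' Icc a b)) :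
    IsClosed (variationDominated f a b) := by
  simp only [variationDominated, ofPred_and, ofPred_forall]
  refine (isClosed_iInter fun t => hf.isClosed.preimage (continuous_apply t)).inter <|
    (isClosed_eq (continuous_apply a) continuous_const).inter <|
    (isClosed_eq (continuous_apply b) continuous_const).inter <|
    isClosed_iInter fun u => isClosed_iInter fun _ => isClosed_iInter fun v =>
      isClosed_iInter fun _ => isClosed_iInter fun _ => isClosed_le
        ((continuous_apply u).edist (continuous_apply v)) continuous_const

lemma isCompact_variationDominated (hf : ContinuousOn f (Icc a b)) :
    IsCompact (variationDominated f a b) := by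
  have hK := isCompact_Icc.image_of_continuousOn hf
  exact (isCompact_univ_pi fun _ => hK).of_isClosed_subset (isClosed_variationDominated hK)
    fun g hg t _ => hg.1 t

lemma projIcc_comp_mem_variationDominated (hab : a ≤ b) :
    (fun t => f (projIcc a b hab t)) ∈ variationDominated f a b := by
  refine ⟨fun t => mem_image_of_mem f (projIcc a b hab t).2, by simp only [projIcc_left],
    by simp only [projIcc_right], fun u hu v hv huv => ?_⟩
  simp only [projIcc_of_mem hab hu, projIcc_of_mem hab hv]
  exact eVariationOn.edist_le f ⟨le_rfl, huv⟩ ⟨huv, le_rfl⟩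

lemma eVariationOn_Icc_le_of_isMinOn (hab : a ≤ b)
    (hg : IsMinOn (fun g => eVariationOn g (Icc a b)) (variationDominated f a b) g) :
    eVariationOn g (Icc a b) ≤ eVariationOn f (Icc a b) :=
  (hg (projIcc_comp_mem_variationDominated hab)).trans_eq <|
    eVariationOn.eq_of_eqOn fun t ht => by simp only [projIcc_of_mem hab ht]

lemma continuousOn_of_mem_variationDominated (hf : BoundedVariationOn f (Icc a b))
    (hfc : ContinuousOn f (Icc a b)) (hg : g ∈ variationDominated f a b) :
    ContinuousOn g (Icc a b) :=
  continuousOn_of_edist_le_eVariationOn hf hfc fun u hu v hv huv => by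
    rw [inter_eq_right.mpr (Icc_subset_Icc hu.1 hv.2)]
    exact hg.2.2.2 u hu v hv huv

lemma cutLoop_mem_variationDominated (hg : g ∈ variationDominated f a b) {s₁ s₂ : ℝ}
    (h₁ : s₁ ∈ Icc a b) (h₂ : s₂ ∈ Icc a b) (h : g s₁ = g s₂) :
    cutLoop g s₁ s₂ ∈ variationDominated f a b := by
  obtain ⟨hval, hga, hgb, hdom⟩ := hg
  have hend : ∀ t, (t ≤ s₁ ∨ s₂ ≤ t) → cutLoop g s₁ s₂ t = g t := fun t ht =>
    cutLoop_of_notMem fun hin => by rcases ht with ht | ht <;> linarith [hin.1, hin.2]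
  refine ⟨fun t => ?_, (hend a (.inl h₁.1)).trans hga, (hend b (.inr h₂.2)).trans hgb,
    fun u hu v hv huv => ?_⟩
  · unfold cutLoop
    split_ifs <;> exact hval _
  by_cases hu' : u ∈ Ioo s₁ s₂ <;> by_cases hv' : v ∈ Ioo s₁ s₂
  · rw [cutLoop_of_mem hu', cutLoop_of_mem hv', edist_self]
    exact zero_le
  · rw [cutLoop_of_mem hu', cutLoop_of_notMem hv', h]
    have hsv : s₂ ≤ v := not_lt.mp fun hvs => hv' ⟨hu'.1.trans_le huv, hvs⟩
    exact (hdom s₂ h₂ v hv hsv).trans (eVariationOn.mono f (Icc_subset_Icc_left hu'.2.le))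
  · rw [cutLoop_of_notMem hu', cutLoop_of_mem hv']
    have hus : u ≤ s₁ := not_lt.mp fun hsu => hu' ⟨hsu, huv.trans_lt hv'.2⟩
    exact (hdom u hu s₁ h₁ hus).trans (eVariationOn.mono f (Icc_subset_Icc_right hv'.1.le))
  · rw [cutLoop_of_notMem hu', cutLoop_of_notMem hv']
    exact hdom u hu v hv huv

lemma eqOn_const_of_isMinOn (hf : BoundedVariationOn f (Icc a b))
    (hg : g ∈ variationDominated f a b)
    (hmin : IsMinOn (fun g => eVariationOn g (Icc a b)) (variationDominated f a b) g)
    {s₁ s₂ : ℝ} (h₁ : a ≤ s₁) (h12 : s₁ ≤ s₂) (h₂ : s₂ ≤ b) (h : g s₁ = g s₂) :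
    EqOn g (fun _ => g s₁) (Icc s₁ s₂) := by
  have hfin : eVariationOn g (Icc a b) ≠ ⊤ :=
    ne_top_of_le_ne_top hf (eVariationOn_Icc_le_of_isMinOn (h₁.trans (h12.trans h₂)) hmin)
  have hsum := eVariationOn_cutLoop_add h₁ h12 h₂ h
  have hcut : eVariationOn (cutLoop g s₁ s₂) (Icc a b) ≠ ⊤ :=
    ne_top_of_le_ne_top hfin (hsum ▸ le_self_add)
  have hzero : eVariationOn g (Icc s₁ s₂) = 0 :=
    le_zero_iff.mp <| ENNReal.le_of_add_le_add_left hcut <| by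
      rw [add_zero, hsum]
      exact hmin (cutLoop_mem_variationDominated hg ⟨h₁, h12.trans h₂⟩ ⟨h₁.trans h12, h₂⟩ h)
  exact fun t ht => edist_eq_zero.mp <|
    (eVariationOn.eq_zero_iff g).mp hzero t ht s₁ ⟨le_rfl, h12⟩

end Dominated

lemma pathHomotopicIn_subPath_const {E : Type*} [TopologicalSpace E] {S : Set E} {γ : ℝ → E}
    {s₁ s₂ : ℝ} {c : E} (hc : c ∈ S) (h12 : s₁ ≤ s₂) (hγ : EqOn γ (fun _ => c) (Icc s₁ s₂)) :
    PathHomotopicIn S (subPath γ s₁ s₂) (fun _ => c) := by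
  have hsub : ∀ s ∈ Icc (0:ℝ) 1, subPath γ s₁ s₂ s = c := fun s hs =>
    hγ ⟨by nlinarith [hs.1], by nlinarith [hs.2]⟩
  exact ⟨fun _ => c, continuousOn_const, fun _ _ => hc, fun s hs => (hsub s hs).symm,
    fun _ _ => rfl, fun _ _ => (hsub 0 (left_mem_Icc.mpr zero_le_one)).symm,
    fun _ _ => (hsub 1 (right_mem_Icc.mpr zero_le_one)).symm⟩

theorem stmt_5_general (𝒳 𝒪 : Set (EuclideanSpace ℝ (Fin 2)))
    (xa x : EuclideanSpace ℝ (Fin 2))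
    (hjoin : ∃ γ₀ : ℝ → EuclideanSpace ℝ (Fin 2),
      IsPathIn (closure 𝒳 \ interior 𝒪) γ₀ xa x ∧ eVariationOn γ₀ (Icc 0 1) ≠ ⊤) :
    ∃ γ : ℝ → EuclideanSpace ℝ (Fin 2),
      IsPathIn (closure 𝒳 \ interior 𝒪) γ xa x ∧
      ∀ s₁ s₂ : ℝ, 0 ≤ s₁ → s₁ ≤ s₂ → s₂ ≤ 1 → γ s₁ = γ s₂ →
        PathHomotopicIn (closure 𝒳 \ interior 𝒪) (subPath γ s₁ s₂) (fun _ => γ s₁) := by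
  obtain ⟨γ₀, ⟨hcont, hfree, rfl, rfl⟩, hfin⟩ := hjoin
  obtain ⟨γ, hγ, hmin⟩ := LowerSemicontinuousOn.exists_isMinOn
    ⟨_, projIcc_comp_mem_variationDominated zero_le_one⟩ (isCompact_variationDominated hcont)
    ((lowerSemicontinuous_eVariationOn (Icc (0:ℝ) 1)).lowerSemicontinuousOn _)
  have hγfree : ∀ t, γ t ∈ closure 𝒳 \ interior 𝒪 := fun t =>
    MapsTo.image_subset hfree (hγ.1 t)
  refine ⟨γ, ⟨continuousOn_of_mem_variationDominated hfin hcont hγ, fun t _ => hγfree t,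
    hγ.2.1, hγ.2.2.1⟩, fun s₁ s₂ h₁ h12 h₂ hloop => ?_⟩
  exact pathHomotopicIn_subPath_const (hγfree s₁) h12
    (eqOn_const_of_isMinOn hfin hγ hmin h₁ h12 h₂ hloop)

/-- Every point of the free workspace joined to the anchor by a finite-length free path is
reachable by a tether configuration that is non-entangled in the sense of the
2D Tether Loop around Obstacle definition. -/
theorem stmt_5 (𝒳 𝒪 : Set (EuclideanSpace ℝ (Fin 2)))
    (hXopen : IsOpen 𝒳) (hXconv : Convex ℝ 𝒳) (hOclosed : IsClosed 𝒪) (hOX : 𝒪 ⊆ 𝒳)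
    (xa x : EuclideanSpace ℝ (Fin 2))
    (hxa : xa ∈ closure 𝒳 \ interior 𝒪) (hx : x ∈ closure 𝒳 \ interior 𝒪)
    (hjoin : ∃ γ₀ : ℝ → EuclideanSpace ℝ (Fin 2),
      IsPathIn (closure 𝒳 \ interior 𝒪) γ₀ xa x ∧ eVariationOn γ₀ (Icc 0 1) ≠ ⊤) :
    ∃ γ : ℝ → EuclideanSpace ℝ (Fin 2),
      IsPathIn (closure 𝒳 \ interior 𝒪) γ xa x ∧
      ∀ s₁ s₂ : ℝ, 0 ≤ s₁ → s₁ ≤ s₂ → s₂ ≤ 1 → γ s₁ = γ s₂ →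
        PathHomotopicIn (closure 𝒳 \ interior 𝒪) (subPath γ s₁ s₂) (fun _ => γ s₁) :=
  stmt_5_general 𝒳 𝒪 xa x hjoin
end
end

section
/- Let 𝒳 ⊆ ℝⁿ be open and convex, 𝒪 ⊆ 𝒳 closed, 𝒳_free := closure(𝒳) \ interior(𝒪), and let γ be a path in 𝒳_free such that convexHull(range γ) ∩ interior(𝒪) = ∅. Then for all 0 ≤ s₁ ≤ s₂ ≤ 1, the restricted path γ|[s₁,s₂] is path-homotopic within 𝒳_free to the straight-line path l_{γ(s₁),γ(s₂)}. (Non-entanglement under the Obstacle-free Convex Hull definition implies non-entanglement under the Local Visibility Homotopy definition.) -/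
/-!
Every point of the straight-line homotopy between `γ|[s₁,s₂]` and the segment
`[γ(s₁), γ(s₂)]` is a convex combination of points of the convex hull of `γ`. That hull lies
in `closure 𝒳` because `closure 𝒳` is convex and contains `γ`, and it misses `interior 𝒪` by
assumption, so the homotopy stays in the free workspace.
-/

open Set

noncomputable section

theorem PathHomotopicIn.mono {E : Type*} [TopologicalSpace E] {S T : Set E} {γ₀ γ₁ : ℝ → E}
    (h : PathHomotopicIn S γ₀ γ₁) (hST : S ⊆ T) : PathHomotopicIn T γ₀ γ₁ := by
  obtain ⟨H, hcont, hmem, hrest⟩ := h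
  exact ⟨H, hcont, fun p hp => hST (hmem p hp), hrest⟩

theorem Convex.mapsTo_linePath {E : Type*} [AddCommGroup E] [Module ℝ E] {C : Set E}
    (hC : Convex ℝ C) {p q : E} (hp : p ∈ C) (hq : q ∈ C) : MapsTo (linePath p q) (Icc 0 1) C :=
  fun t ht => hC hp hq (sub_nonneg.2 ht.2) ht.1 (sub_add_cancel 1 t)

section Convex

variable {E : Type*} [TopologicalSpace E] [AddCommGroup E] [Module ℝ E] [ContinuousAdd E]
  [ContinuousSMul ℝ E]

theorem Convex.pathHomotopicIn {C : Set E} (hC : Convex ℝ C) {γ₀ γ₁ : ℝ → E}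
    (hγ₀ : ContinuousOn γ₀ (Icc 0 1)) (hγ₁ : ContinuousOn γ₁ (Icc 0 1))
    (hγ₀C : MapsTo γ₀ (Icc 0 1) C) (hγ₁C : MapsTo γ₁ (Icc 0 1) C)
    (h_zero : γ₀ 0 = γ₁ 0) (h_one : γ₀ 1 = γ₁ 1) : PathHomotopicIn C γ₀ γ₁ := by
  refine ⟨fun p => (1 - p.2) • γ₀ p.1 + p.2 • γ₁ p.1, ?_, ?_, ?_, ?_, ?_, ?_⟩
  · have h₀ : ContinuousOn (fun p : ℝ × ℝ => γ₀ p.1) (Icc 0 1 ×ˢ Icc 0 1) :=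
      hγ₀.comp continuousOn_fst fun _ hp => (mem_prod.1 hp).1
    have h₁ : ContinuousOn (fun p : ℝ × ℝ => γ₁ p.1) (Icc 0 1 ×ˢ Icc 0 1) :=
      hγ₁.comp continuousOn_fst fun _ hp => (mem_prod.1 hp).1
    exact ((continuousOn_const.sub continuousOn_snd).smul h₀).add (continuousOn_snd.smul h₁)
  · rintro ⟨s, t⟩ ⟨hs, ht⟩
    exact hC (hγ₀C hs) (hγ₁C hs) (sub_nonneg.2 ht.2) ht.1 (sub_add_cancel 1 t)
  · intro s _
    simp
  · intro s _
    simp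
  · intro t _
    simp only [← h_zero]
    exact Convex.combo_self (sub_add_cancel 1 t) _
  · intro t _
    simp only [← h_one]
    exact Convex.combo_self (sub_add_cancel 1 t) _

theorem continuous_linePath (p q : E) : Continuous (linePath p q) := by
  unfold linePath
  fun_prop

end Convex

theorem mapsTo_subPath_param {s₁ s₂ : ℝ} (h₁ : 0 ≤ s₁) (h₁₂ : s₁ ≤ s₂) (h₂ : s₂ ≤ 1) :
    MapsTo (fun s : ℝ => s₁ + s * (s₂ - s₁)) (Icc 0 1) (Icc 0 1) := by
  intro s ⟨hs₀, hs₁⟩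
  constructor <;> nlinarith

theorem ContinuousOn.subPath {E : Type*} [TopologicalSpace E] {γ : ℝ → E}
    (hγ : ContinuousOn γ (Icc 0 1)) {s₁ s₂ : ℝ} (h₁ : 0 ≤ s₁) (h₁₂ : s₁ ≤ s₂) (h₂ : s₂ ≤ 1) :
    ContinuousOn (subPath γ s₁ s₂) (Icc 0 1) :=
  hγ.comp (by fun_prop) (mapsTo_subPath_param h₁ h₁₂ h₂)

theorem mapsTo_subPath {E : Type*} (γ : ℝ → E) {s₁ s₂ : ℝ} (h₁ : 0 ≤ s₁) (h₁₂ : s₁ ≤ s₂)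
    (h₂ : s₂ ≤ 1) : MapsTo (subPath γ s₁ s₂) (Icc 0 1) (γ '' Icc 0 1) :=
  fun _ hs => mem_image_of_mem γ (mapsTo_subPath_param h₁ h₁₂ h₂ hs)

theorem convexHull_image_subset_diff_interior {E : Type*} [AddCommGroup E] [Module ℝ E]
    [TopologicalSpace E] {𝒳 𝒪 : Set E} (hXconv : Convex ℝ (closure 𝒳)) {γ : ℝ → E}
    (hmem : ∀ s ∈ Icc (0:ℝ) 1, γ s ∈ closure 𝒳 \ interior 𝒪)
    (hconv : convexHull ℝ (γ '' Icc 0 1) ∩ interior 𝒪 = ∅) :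
    convexHull ℝ (γ '' Icc 0 1) ⊆ closure 𝒳 \ interior 𝒪 := by
  refine subset_sdiff.2 ⟨convexHull_min ?_ hXconv, disjoint_iff_inter_eq_empty.2 hconv⟩
  rintro _ ⟨s, hs, rfl⟩
  exact (hmem s hs).1

theorem stmt_10_general {n : ℕ} (𝒳 𝒪 : Set (EuclideanSpace ℝ (Fin n)))
    (hXconv : Convex ℝ 𝒳)
    (γ : ℝ → EuclideanSpace ℝ (Fin n))
    (hcont : ContinuousOn γ (Icc 0 1))
    (hmem : ∀ s ∈ Icc (0:ℝ) 1, γ s ∈ closure 𝒳 \ interior 𝒪)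
    (hconv : convexHull ℝ (γ '' Icc 0 1) ∩ interior 𝒪 = ∅) :
    ∀ s₁ s₂ : ℝ, 0 ≤ s₁ → s₁ ≤ s₂ → s₂ ≤ 1 →
      PathHomotopicIn (closure 𝒳 \ interior 𝒪) (subPath γ s₁ s₂)
        (linePath (γ s₁) (γ s₂)) := by
  intro s₁ s₂ h₁ h₁₂ h₂
  set C := convexHull ℝ (γ '' Icc 0 1)
  have hγC : MapsTo γ (Icc 0 1) C := fun s hs => subset_convexHull ℝ _ (mem_image_of_mem γ hs)
  have hC : Convex ℝ C := convex_convexHull ℝ _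
  refine (hC.pathHomotopicIn (hcont.subPath h₁ h₁₂ h₂) (continuous_linePath _ _).continuousOn
    ((mapsTo_subPath γ h₁ h₁₂ h₂).mono_right (subset_convexHull ℝ _))
    (hC.mapsTo_linePath (hγC ⟨h₁, h₁₂.trans h₂⟩) (hγC ⟨h₁.trans h₁₂, h₂⟩))
    (by simp [subPath, linePath]) (by simp [subPath, linePath])).mono ?_
  exact convexHull_image_subset_diff_interior hXconv.closure hmem hconv

/-- Non-entanglement under the Obstacle-free Convex Hull definition implies
non-entanglement under the Local Visibility Homotopy definition. -/
theorem stmt_10 {n : ℕ} (𝒳 𝒪 : Set (EuclideanSpace ℝ (Fin n)))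
    (hXopen : IsOpen 𝒳) (hXconv : Convex ℝ 𝒳) (hOclosed : IsClosed 𝒪) (hOX : 𝒪 ⊆ 𝒳)
    (γ : ℝ → EuclideanSpace ℝ (Fin n))
    (hcont : ContinuousOn γ (Icc 0 1))
    (hmem : ∀ s ∈ Icc (0:ℝ) 1, γ s ∈ closure 𝒳 \ interior 𝒪)
    (hconv : convexHull ℝ (γ '' Icc 0 1) ∩ interior 𝒪 = ∅) :
    ∀ s₁ s₂ : ℝ, 0 ≤ s₁ → s₁ ≤ s₂ → s₂ ≤ 1 →
      PathHomotopicIn (closure 𝒳 \ interior 𝒪) (subPath γ s₁ s₂)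
        (linePath (γ s₁) (γ s₂)) :=
  stmt_10_general 𝒳 𝒪 hXconv γ hcont hmem hconv
end
end

section
/- Let 𝒳 ⊆ ℝⁿ be open and convex, 𝒪 ⊆ 𝒳 closed, 𝒳_free := closure(𝒳) \ interior(𝒪), and let γ be a closed path in 𝒳_free with γ(0) = γ(1) = x_a such that convexHull(range γ) ∩ interior(𝒪) = ∅. Then γ is path-homotopic within 𝒳_free to the constant path at x_a. (Non-entanglement of a closed tether under the Obstacle-free Convex Hull definition implies non-entanglement under the Closed Tether Homotopy to Constant Map definition.) -/
open Set

noncomputable section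

section LinePath

variable {E : Type*} [AddCommGroup E] [Module ℝ E]

theorem linePath_zero (p q : E) : linePath p q 0 = p := by
  simp [linePath]

theorem linePath_one (p q : E) : linePath p q 1 = q := by
  simp [linePath]

theorem linePath_self (p : E) (t : ℝ) : linePath p p t = p := by
  simp [linePath, ← add_smul]

theorem linePath_mem_of_convex {C : Set E} (hC : Convex ℝ C) {p q : E} (hp : p ∈ C) (hq : q ∈ C)
    {t : ℝ} (ht : t ∈ Icc (0:ℝ) 1) : linePath p q t ∈ C :=
  hC hp hq (sub_nonneg.2 ht.2) ht.1 (sub_add_cancel 1 t)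

/-- The straight-line homotopy contracts a loop at `x` within the convex hull of its image. -/
theorem pathHomotopicIn_const_of_convexHull_subset [TopologicalSpace E] [ContinuousAdd E]
    [ContinuousSMul ℝ E] {S : Set E} {γ : ℝ → E} {x : E}
    (hγ : ContinuousOn γ (Icc 0 1)) (h0 : γ 0 = x) (h1 : γ 1 = x)
    (hS : convexHull ℝ (γ '' Icc 0 1) ⊆ S) :
    PathHomotopicIn S γ (fun _ => x) := by
  have hx : x ∈ convexHull ℝ (γ '' Icc 0 1) :=
    h0 ▸ subset_convexHull ℝ _ (mem_image_of_mem γ (left_mem_Icc.2 zero_le_one))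
  refine ⟨fun p => linePath (γ p.1) x p.2, ?_, ?_, ?_, ?_, ?_, ?_⟩
  · unfold linePath
    exact ((continuousOn_const.sub continuousOn_snd).smul
      (hγ.comp continuousOn_fst mapsTo_fst_prod)).add (continuousOn_snd.smul continuousOn_const)
  · rintro ⟨s, t⟩ ⟨hs, ht⟩
    exact hS (linePath_mem_of_convex (convex_convexHull ℝ _)
      (subset_convexHull ℝ _ (mem_image_of_mem γ hs)) hx ht)
  · exact fun s _ => linePath_zero _ _
  · exact fun s _ => linePath_one _ _
  · exact fun t _ => by simp only [h0, linePath_self]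
  · exact fun t _ => by simp only [h1, linePath_self]

end LinePath

theorem stmt_11_general {n : ℕ} (𝒳 𝒪 : Set (EuclideanSpace ℝ (Fin n)))
    (hXconv : Convex ℝ 𝒳)
    (γ : ℝ → EuclideanSpace ℝ (Fin n)) (xa : EuclideanSpace ℝ (Fin n))
    (hγ : IsPathIn (closure 𝒳 \ interior 𝒪) γ xa xa)
    (hconv : convexHull ℝ (γ '' Icc 0 1) ∩ interior 𝒪 = ∅) :
    PathHomotopicIn (closure 𝒳 \ interior 𝒪) γ (fun _ => xa) := by
  obtain ⟨hcont, hmem, h0, h1⟩ := hγ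
  have hull_subset_closure : convexHull ℝ (γ '' Icc 0 1) ⊆ closure 𝒳 :=
    convexHull_min (image_subset_iff.2 fun s hs => (hmem s hs).1) hXconv.closure
  have hull_disjoint : Disjoint (convexHull ℝ (γ '' Icc 0 1)) (interior 𝒪) :=
    disjoint_iff_inter_eq_empty.2 hconv
  exact pathHomotopicIn_const_of_convexHull_subset hcont h0 h1
    (subset_sdiff.2 ⟨hull_subset_closure, hull_disjoint⟩)

/-- Non-entanglement of a closed tether under the Obstacle-free Convex Hull definition
implies non-entanglement under the Closed Tether Homotopy to Constant Map definition. -/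
theorem stmt_11 {n : ℕ} (𝒳 𝒪 : Set (EuclideanSpace ℝ (Fin n)))
    (hXopen : IsOpen 𝒳) (hXconv : Convex ℝ 𝒳) (hOclosed : IsClosed 𝒪) (hOX : 𝒪 ⊆ 𝒳)
    (γ : ℝ → EuclideanSpace ℝ (Fin n)) (xa : EuclideanSpace ℝ (Fin n))
    (hγ : IsPathIn (closure 𝒳 \ interior 𝒪) γ xa xa)
    (hconv : convexHull ℝ (γ '' Icc 0 1) ∩ interior 𝒪 = ∅) :
    PathHomotopicIn (closure 𝒳 \ interior 𝒪) γ (fun _ => xa) :=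
  stmt_11_general 𝒳 𝒪 hXconv γ xa hγ hconv
end
end
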